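/- Let ζ = e^{2πi/6} and let D(z) = max{1, |Re(z)|, Im(z)^{-1}} for z ∈ ℍ. If z ∈ ℍ does not lie in the SL₂(ℤ)-orbit of ζ, then every ρ = [[a,b],[c,d]] ∈ SL₂(ℤ) with ρz ∈ 𝓕̄ satisfies max{1, |a|, |b|, |c|, |d|} ≤ 264·D(z)⁹. If z lies in the SL₂(ℤ)-orbit of ζ, then every ρ = [[a,b],[c,d]] ∈ SL₂(ℤ) with ρz ∈ 𝓕̄ satisfies max{1, |a|, |b|, |c|, |d|} ≤ 1056·D(z)⁹. -/

import Mathlib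

/-!
Write `w = ρz` and `u = cz + d`. Unimodularity gives `Im w · |u|² = Im z` and `(a - cw) · u = 1`.
Since `Im w ≥ 1/2` on `𝓕̄`, we get `c² (Im z)² ≤ |u|² ≤ 2 Im z`, which bounds `c`, and for `c ≠ 0`
also `Im z ≤ 2` and hence `d`; `|a - cw| = 1/|u|` then bounds `a`, and `b = wu - az` bounds `b`.
For `c = 0` one has `a = d = ±1` and `b` is read off from `Re w`. Altogether the height is at
most `9 D(z)²`.
-/

open Real Complex

/-- The closed standard fundamental domain
`{τ ∈ ℍ : |Re τ| ≤ 1/2, |τ| ≥ 1}` viewed inside `ℂ`. -/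
def inFD (z : ℂ) : Prop :=
  0 < z.im ∧ |z.re| ≤ 1 / 2 ∧ 1 ≤ ‖z‖

/-- The fractional linear (Möbius) action of an integer matrix `[[a,b],[c,d]]` on `ℂ`. -/
noncomputable def moebius (a b c d : ℤ) (τ : ℂ) : ℂ :=
  ((a : ℂ) * τ + (b : ℂ)) / ((c : ℂ) * τ + (d : ℂ))

/-- `D(z) = max {1, |Re z|, (Im z)⁻¹}`. -/
noncomputable def Dfun (z : ℂ) : ℝ :=
  max 1 (max |z.re| z.im⁻¹)

/-- The multiplicative height of an integer matrix `[[a,b],[c,d]]`,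
regarded as a point of `ℚ⁴`. -/
noncomputable def matHeight (a b c d : ℤ) : ℝ :=
  max 1 (max |(a : ℝ)| (max |(b : ℝ)| (max |(c : ℝ)| |(d : ℝ)|)))

/-- `z` lies in the `SL₂(ℤ)`-orbit of `ζ = e^{2πi/6}`. -/
def inOrbitZeta (z : ℂ) : Prop :=
  ∃ a b c d : ℤ, a * d - b * c = 1 ∧
    z = moebius a b c d (Complex.exp (2 * Real.pi * Complex.I / 6))

open ComplexConjugate

section
variable {a b c d : ℤ} {z : ℂ}

theorem moebius_mul_denom (hu : (c : ℂ) * z + d ≠ 0) :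
    moebius a b c d z * (c * z + d) = a * z + b :=
  div_mul_cancel₀ _ hu

theorem denom_ne_zero_of_inFD (h : inFD (moebius a b c d z)) : (c : ℂ) * z + d ≠ 0 := by
  intro hu
  simpa [moebius, hu] using h.1

theorem im_moebius_mul_normSq (hdet : a * d - b * c = 1) (hu : (c : ℂ) * z + d ≠ 0) :
    (moebius a b c d z).im * normSq (c * z + d) = z.im := by
  have hconj : moebius a b c d z * (normSq (c * z + d) : ℂ) = (a * z + b) * conj (c * z + d) := by
    rw [← Complex.mul_conj, ← mul_assoc, moebius_mul_denom hu]
  have hdetR : (a : ℝ) * d - b * c = 1 := by exact_mod_cast hdet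
  have him := congrArg Complex.im hconj
  simp only [mul_im, ofReal_im, mul_zero, ofReal_re, zero_add, map_add, map_mul, map_intCast,
    add_re, mul_re, intCast_re, intCast_im, zero_mul, sub_zero, add_im, conj_im, mul_neg, conj_re,
    add_zero, neg_zero] at him
  rw [him]
  linear_combination z.im * hdetR

theorem sub_mul_moebius_mul_denom (hdet : a * d - b * c = 1) (hu : (c : ℂ) * z + d ≠ 0) :
    ((a : ℂ) - c * moebius a b c d z) * (c * z + d) = 1 := by
  have hdetC : (a : ℂ) * d - b * c = 1 := by exact_mod_cast hdet
  linear_combination (-(c : ℂ)) * moebius_mul_denom (a := a) (b := b) hu + hdetC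

theorem inFD.half_le_im {w : ℂ} (h : inFD w) : 1 / 2 ≤ w.im := by
  obtain ⟨him, hre, hnorm⟩ := h
  have hsq : 1 ≤ w.re ^ 2 + w.im ^ 2 := by
    rw [sq, sq, ← normSq_apply, ← Complex.sq_norm]
    nlinarith
  nlinarith [abs_le.mp hre]

theorem inFD.norm_le {w : ℂ} (h : inFD w) : ‖w‖ ≤ 1 / 2 + w.im :=
  (norm_le_abs_re_add_abs_im w).trans (by rw [abs_of_pos h.1]; linarith [h.2.1])

theorem one_le_Dfun (z : ℂ) : 1 ≤ Dfun z := le_max_left _ _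

theorem abs_re_le_Dfun (z : ℂ) : |z.re| ≤ Dfun z := (le_max_left _ _).trans (le_max_right _ _)

theorem one_le_im_mul_Dfun (hz : 0 < z.im) : 1 ≤ z.im * Dfun z :=
  (inv_le_iff_one_le_mul₀' hz).mp ((le_max_right _ _).trans (le_max_right _ _))

theorem normSq_denom_eq (c d : ℤ) (z : ℂ) :
    normSq ((c : ℂ) * z + d) = (c * z.re + d) ^ 2 + (c * z.im) ^ 2 := by
  simp [normSq_apply]
  ring

theorem abs_intCast_le_sq (n : ℤ) : |(n : ℝ)| ≤ (n : ℝ) ^ 2 := by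
  have h := Int.natAbs_le_self_sq n
  rw [Int.natCast_natAbs] at h
  exact_mod_cast h

theorem one_le_sq_intCast (hc : c ≠ 0) : (1 : ℝ) ≤ (c : ℝ) ^ 2 := by
  have h : (1 : ℝ) ≤ |(c : ℝ)| := by exact_mod_cast Int.one_le_abs hc
  nlinarith [sq_abs (c : ℝ)]

theorem sq_im_le_normSq_denom (hc : c ≠ 0) : z.im ^ 2 ≤ normSq ((c : ℂ) * z + d) := by
  rw [normSq_denom_eq]
  nlinarith [one_le_sq_intCast hc, sq_nonneg z.im, sq_nonneg ((c : ℝ) * z.re + d)]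

theorem im_pos_of_inFD (hdet : a * d - b * c = 1) (h : inFD (moebius a b c d z)) :
    0 < z.im := by
  have hu := denom_ne_zero_of_inFD h
  rw [← im_moebius_mul_normSq hdet hu]
  exact mul_pos h.1 (normSq_pos.mpr hu)

theorem normSq_denom_le (hdet : a * d - b * c = 1) (h : inFD (moebius a b c d z)) :
    normSq ((c : ℂ) * z + d) ≤ 2 * z.im := by
  have := im_moebius_mul_normSq hdet (denom_ne_zero_of_inFD h)
  nlinarith [h.half_le_im, normSq_nonneg ((c : ℂ) * z + d)]

theorem sq_c_le (hdet : a * d - b * c = 1) (h : inFD (moebius a b c d z)) :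
    (c : ℝ) ^ 2 ≤ 2 * Dfun z := by
  have hy := im_pos_of_inFD hdet h
  have hN := normSq_denom_le hdet h
  rw [normSq_denom_eq] at hN
  have hcy : (c : ℝ) ^ 2 * z.im ≤ 2 := by nlinarith [sq_nonneg ((c : ℝ) * z.re + d)]
  nlinarith [one_le_im_mul_Dfun hy, sq_nonneg (c : ℝ)]

theorem abs_c_le (hdet : a * d - b * c = 1) (h : inFD (moebius a b c d z)) :
    |(c : ℝ)| ≤ 2 * Dfun z :=
  (abs_intCast_le_sq c).trans (sq_c_le hdet h)

theorem im_le_two (hdet : a * d - b * c = 1) (h : inFD (moebius a b c d z)) (hc : c ≠ 0) :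
    z.im ≤ 2 := by
  nlinarith [normSq_denom_le hdet h, sq_im_le_normSq_denom (d := d) (z := z) hc,
    im_pos_of_inFD hdet h]

theorem im_moebius_le (hdet : a * d - b * c = 1) (h : inFD (moebius a b c d z)) (hc : c ≠ 0) :
    (moebius a b c d z).im ≤ Dfun z := by
  have hy := im_pos_of_inFD hdet h
  have hN := im_moebius_mul_normSq hdet (denom_ne_zero_of_inFD h)
  have hty : (moebius a b c d z).im * z.im ≤ 1 := by
    nlinarith [sq_im_le_normSq_denom (d := d) (z := z) hc, h.1]
  nlinarith [one_le_im_mul_Dfun hy, h.1]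

theorem abs_d_le (hdet : a * d - b * c = 1) (h : inFD (moebius a b c d z)) (hc : c ≠ 0) :
    |(d : ℝ)| ≤ 4 * Dfun z ^ 2 := by
  have hN := normSq_denom_le hdet h
  rw [normSq_denom_eq] at hN
  have hy := im_le_two hdet h hc
  have hcxd : |(c : ℝ) * z.re + d| ≤ 2 :=
    abs_le.mpr ⟨by nlinarith [sq_nonneg ((c : ℝ) * z.im)], by nlinarith [sq_nonneg ((c : ℝ) * z.im)]⟩
  have hD := one_le_Dfun z
  calc |(d : ℝ)| = |((c : ℝ) * z.re + d) - c * z.re| := by ring_nf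
    _ ≤ |(c : ℝ) * z.re + d| + |(c : ℝ)| * |z.re| := by rw [← abs_mul]; exact abs_sub _ _
    _ ≤ 2 + 2 * Dfun z * Dfun z := by
      gcongr
      exacts [abs_c_le hdet h, abs_re_le_Dfun z]
    _ ≤ 4 * Dfun z ^ 2 := by nlinarith

theorem abs_a_le (hdet : a * d - b * c = 1) (h : inFD (moebius a b c d z)) (hc : c ≠ 0) :
    |(a : ℝ)| ≤ 2 * Dfun z := by
  set w := moebius a b c d z
  have hy := im_pos_of_inFD hdet h
  have hinv : normSq ((a : ℂ) - c * w) * normSq ((c : ℂ) * z + d) = 1 := by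
    rw [← normSq_mul, sub_mul_moebius_mul_denom hdet (denom_ne_zero_of_inFD h), normSq_one]
  have hre : ((a : ℂ) - c * w).re = a - c * w.re := by simp
  have hsq := re_sq_le_normSq ((a : ℂ) - c * w)
  rw [hre] at hsq
  have hey : |(a : ℝ) - c * w.re| * z.im ≤ 1 := by
    nlinarith [sq_im_le_normSq_denom (d := d) (z := z) hc, sq_abs ((a : ℝ) - c * w.re),
      normSq_nonneg ((a : ℂ) - c * w), abs_nonneg ((a : ℝ) - c * w.re)]
  have he : |(a : ℝ) - c * w.re| ≤ Dfun z := by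
    nlinarith [one_le_im_mul_Dfun hy, abs_nonneg ((a : ℝ) - c * w.re)]
  calc |(a : ℝ)| = |((a : ℝ) - c * w.re) + c * w.re| := by ring_nf
    _ ≤ |(a : ℝ) - c * w.re| + |(c : ℝ)| * |w.re| := by rw [← abs_mul]; exact abs_add_le _ _
    _ ≤ Dfun z + 2 * Dfun z * (1 / 2) := by
      gcongr
      exacts [by linarith [one_le_Dfun z], abs_c_le hdet h, h.2.1]
    _ = 2 * Dfun z := by ring

theorem abs_b_le (hdet : a * d - b * c = 1) (h : inFD (moebius a b c d z)) (hc : c ≠ 0) :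
    |(b : ℝ)| ≤ 9 * Dfun z ^ 2 := by
  set w := moebius a b c d z
  have hy := im_pos_of_inFD hdet h
  have hD := one_le_Dfun z
  have hb : (b : ℂ) = w * (c * z + d) - a * z := by
    linear_combination -(moebius_mul_denom (a := a) (b := b) (denom_ne_zero_of_inFD h))
  have hnu : ‖(c : ℂ) * z + d‖ ≤ 2 := by
    have : ‖(c : ℂ) * z + d‖ ^ 2 ≤ 2 ^ 2 := by
      rw [Complex.sq_norm]
      linarith [normSq_denom_le hdet h, im_le_two hdet h hc]
    exact (pow_le_pow_iff_left₀ (norm_nonneg _) zero_le_two two_ne_zero).mp this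
  have hnw : ‖w‖ ≤ 1 / 2 + Dfun z := h.norm_le.trans (by linarith [im_moebius_le hdet h hc])
  have hnz : ‖z‖ ≤ Dfun z + 2 := (norm_le_abs_re_add_abs_im z).trans <| by
    rw [abs_of_pos hy]
    linarith [abs_re_le_Dfun z, im_le_two hdet h hc]
  calc |(b : ℝ)| = ‖w * (c * z + d) - a * z‖ := by rw [← hb, norm_intCast]
    _ ≤ ‖w‖ * ‖(c : ℂ) * z + d‖ + |(a : ℝ)| * ‖z‖ := by
      rw [← norm_mul, ← norm_intCast, ← norm_mul]
      exact norm_sub_le _ _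
    _ ≤ (1 / 2 + Dfun z) * 2 + 2 * Dfun z * (Dfun z + 2) := by
      gcongr
      exact abs_a_le hdet h hc
    _ ≤ 9 * Dfun z ^ 2 := by nlinarith

theorem matHeight_le_of_abs_le {M : ℝ} (h1 : 1 ≤ M) (ha : |(a : ℝ)| ≤ M) (hb : |(b : ℝ)| ≤ M)
    (hc : |(c : ℝ)| ≤ M) (hd : |(d : ℝ)| ≤ M) : matHeight a b c d ≤ M :=
  max_le h1 (max_le ha (max_le hb (max_le hc hd)))

theorem matHeight_le_of_c_eq_zero (hdet : a * d - b * 0 = 1) (h : inFD (moebius a b 0 d z)) :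
    matHeight a b 0 d ≤ 9 * Dfun z ^ 2 := by
  set w := moebius a b 0 d z
  have had : a * d = 1 := by linarith
  have hunit : |(a : ℝ)| = 1 ∧ |(d : ℝ)| = 1 := by
    rcases Int.eq_one_or_neg_one_of_mul_eq_one' had with ⟨rfl, rfl⟩ | ⟨rfl, rfl⟩ <;> norm_num
  have hre := congrArg re (moebius_mul_denom (a := a) (b := b) (denom_ne_zero_of_inFD h))
  simp only [Int.cast_zero, zero_mul, zero_add, mul_re, intCast_re, intCast_im, mul_zero,
    sub_zero, add_re] at hre
  have hD := one_le_Dfun z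
  have hb : |(b : ℝ)| ≤ 1 / 2 + Dfun z := calc
    |(b : ℝ)| = |w.re * d - a * z.re| := by rw [hre]; ring_nf
    _ ≤ |w.re| * |(d : ℝ)| + |(a : ℝ)| * |z.re| := by rw [← abs_mul, ← abs_mul]; exact abs_sub _ _
    _ ≤ 1 / 2 + Dfun z := by
      rw [hunit.1, hunit.2, mul_one, one_mul]
      exact add_le_add h.2.1 (abs_re_le_Dfun z)
  refine matHeight_le_of_abs_le (by nlinarith) ?_ (by nlinarith) ?_ ?_ <;>
    simp only [hunit, Int.cast_zero, abs_zero] <;> nlinarith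

theorem matHeight_le_of_inFD (hdet : a * d - b * c = 1) (h : inFD (moebius a b c d z)) :
    matHeight a b c d ≤ 9 * Dfun z ^ 2 := by
  obtain rfl | hc := eq_or_ne c 0
  · exact matHeight_le_of_c_eq_zero hdet h
  have hD := one_le_Dfun z
  refine matHeight_le_of_abs_le (by nlinarith) ?_ (abs_b_le hdet h hc) ?_ (by nlinarith [abs_d_le hdet h hc])
  · nlinarith [abs_a_le hdet h hc]
  · nlinarith [abs_c_le hdet h]

end

theorem height_of_translating_matrix_general (z : ℂ) :
    (¬ inOrbitZeta z →
      ∀ a b c d : ℤ, a * d - b * c = 1 → inFD (moebius a b c d z) →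
        matHeight a b c d ≤ 264 * Dfun z ^ 9) ∧
    (inOrbitZeta z →
      ∀ a b c d : ℤ, a * d - b * c = 1 → inFD (moebius a b c d z) →
        matHeight a b c d ≤ 1056 * Dfun z ^ 9) := by
  have hD := one_le_Dfun z
  have hpow : Dfun z ^ 2 ≤ Dfun z ^ 9 := pow_le_pow_right₀ hD (by norm_num)
  have hpos : 0 ≤ Dfun z ^ 9 := by positivity
  exact ⟨fun _ a b c d hdet h => by linarith [matHeight_le_of_inFD hdet h],
    fun _ a b c d hdet h => by linarith [matHeight_le_of_inFD hdet h]⟩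

/-- Height bound for matrices translating `z` into the closed fundamental domain:
`264·D(z)⁹` if `z` is not in the `SL₂(ℤ)`-orbit of `ζ = e^{2πi/6}`, and
`1056·D(z)⁹` if it is. -/
theorem height_of_translating_matrix (z : ℂ) (hz : 0 < z.im) :
    (¬ inOrbitZeta z →
      ∀ a b c d : ℤ, a * d - b * c = 1 → inFD (moebius a b c d z) →
        matHeight a b c d ≤ 264 * Dfun z ^ 9) ∧
    (inOrbitZeta z →
      ∀ a b c d : ℤ, a * d - b * c = 1 → inFD (moebius a b c d z) →
        matHeight a b c d ≤ 1056 * Dfun z ^ 9) :=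
  height_of_translating_matrix_general z
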